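/- arXiv:2604.01781 — 2 statements merged into one kernel-verified Lean document; each statement's English description precedes it below -/
import Mathlib

section
/- Let G be a group and let N⁻, M, N⁺ be subgroups of G giving a unique decomposition in G, and suppose moreover that M normalizes both N⁻ and N⁺. Let A and B be subgroups of G, each having an Iwahori decomposition with respect to (N⁻, M, N⁺), and assume A ∩ N⁺ ⊆ B. Then for every g ∈ G the following are equivalent: (i) g = a * b for some a ∈ A and b ∈ B, and also g = m * n for some m ∈ M and n ∈ N⁺; (ii) g = a₀ * b₀ * b₊ for some a₀ ∈ A ∩ M, b₀ ∈ B ∩ M and b₊ ∈ B ∩ N⁺. -/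
/-- Subsets `Nm`, `M`, `Np` of a group `G` give a *unique decomposition* in `G`
if the multiplication map `(a, b, c) ↦ a * b * c` from `Nm × M × Np` to `G` is
injective. -/
def UniqueDecomposition {G : Type*} [Group G] (Nm M Np : Set G) : Prop :=
  ∀ a₁ ∈ Nm, ∀ b₁ ∈ M, ∀ c₁ ∈ Np, ∀ a₂ ∈ Nm, ∀ b₂ ∈ M, ∀ c₂ ∈ Np,
    a₁ * b₁ * c₁ = a₂ * b₂ * c₂ → a₁ = a₂ ∧ b₁ = b₂ ∧ c₁ = c₂

/-- A subgroup `H` of `G` has an *Iwahori decomposition* with respect to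
`(Nm, M, Np)` if every element of `H` is a product of elements of
`H ∩ Nm`, `H ∩ M` and `H ∩ Np` (in this order). -/
def HasIwahoriDecomposition {G : Type*} [Group G] (H : Subgroup G)
    (Nm M Np : Set G) : Prop :=
  ∀ h ∈ H, ∃ hm ∈ (H : Set G) ∩ Nm, ∃ h₀ ∈ (H : Set G) ∩ M,
    ∃ hp ∈ (H : Set G) ∩ Np, h = hm * h₀ * hp

/-!
Write `a = a₋ a₀ a₊` and note that `a₊ ∈ A ∩ N⁺ ⊆ B`, so `a * b = a₋ a₀ b'` with `b' = a₊ b ∈ B`.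
Decomposing `b' = b₋ b₀ b₊` and moving `b₋` past `a₀` gives
`a * b = (a₋ a₀ b₋ a₀⁻¹) (a₀ b₀) b₊ ∈ N⁻ M N⁺`. If this also lies in `M N⁺`, uniqueness of the
decomposition forces the `N⁻`-factor to be trivial, leaving `a * b = a₀ b₀ b₊`.
-/

theorem UniqueDecomposition.eq_one_of_mul_mul_eq {G : Type*} [Group G] {Nm M Np : Set G}
    (hud : UniqueDecomposition Nm M Np) (h1 : (1 : G) ∈ Nm) {x y z m n : G} (hx : x ∈ Nm)
    (hy : y ∈ M) (hz : z ∈ Np) (hm : m ∈ M) (hn : n ∈ Np) (h : x * y * z = m * n) : x = 1 :=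
  (hud x hx y hy z hz 1 h1 m hm n hn (by rw [h, one_mul])).1

theorem HasIwahoriDecomposition.exists_mul_eq_of_inter_subset {G : Type*} [Group G]
    {Nm M Np : Set G} {A B : Subgroup G}
    (hA : HasIwahoriDecomposition A Nm M Np) (hB : HasIwahoriDecomposition B Nm M Np)
    (hAB : (A : Set G) ∩ Np ⊆ B) {a b : G} (ha : a ∈ A) (hb : b ∈ B) :
    ∃ am ∈ (A : Set G) ∩ Nm, ∃ a₀ ∈ (A : Set G) ∩ M, ∃ bm ∈ (B : Set G) ∩ Nm,
      ∃ b₀ ∈ (B : Set G) ∩ M, ∃ bp ∈ (B : Set G) ∩ Np, a * b = am * a₀ * bm * b₀ * bp := by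
  obtain ⟨am, ham, a₀, ha₀, ap, hap, rfl⟩ := hA a ha
  obtain ⟨bm, hbm, b₀, hb₀, bp, hbp, hdec⟩ := hB (ap * b) (B.mul_mem (hAB hap) hb)
  exact ⟨am, ham, a₀, ha₀, bm, hbm, b₀, hb₀, bp, hbp, by rw [mul_assoc _ ap, hdec]; group⟩

theorem mem_mul_inter_levi_decomposition_general
    {G : Type*} [Group G] (Nm M Np A B : Subgroup G)
    (hud : UniqueDecomposition (Nm : Set G) (M : Set G) (Np : Set G))
    (hnorm_m : ∀ m ∈ M, ∀ n ∈ Nm, m * n * m⁻¹ ∈ Nm)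
    (hA : HasIwahoriDecomposition A (Nm : Set G) (M : Set G) (Np : Set G))
    (hB : HasIwahoriDecomposition B (Nm : Set G) (M : Set G) (Np : Set G))
    (hAB : (A : Set G) ∩ (Np : Set G) ⊆ (B : Set G))
    (g : G) :
    ((∃ a ∈ A, ∃ b ∈ B, g = a * b) ∧ (∃ m ∈ M, ∃ n ∈ Np, g = m * n)) ↔
      (∃ a₀ ∈ (A : Set G) ∩ (M : Set G), ∃ b₀ ∈ (B : Set G) ∩ (M : Set G),
        ∃ bp ∈ (B : Set G) ∩ (Np : Set G), g = a₀ * b₀ * bp) := by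
  constructor
  · rintro ⟨⟨a, ha, b, hb, rfl⟩, m, hm, n, hn, hg⟩
    obtain ⟨am, ham, a₀, ha₀, bm, hbm, b₀, hb₀, bp, hbp, hab⟩ :=
      hA.exists_mul_eq_of_inter_subset hB hAB ha hb
    have hfactor : a * b = am * (a₀ * bm * a₀⁻¹) * (a₀ * b₀) * bp := by rw [hab]; group
    have hminus : am * (a₀ * bm * a₀⁻¹) = 1 :=
      hud.eq_one_of_mul_mul_eq Nm.one_mem (Nm.mul_mem ham.2 (hnorm_m a₀ ha₀.2 bm hbm.2))
        (M.mul_mem ha₀.2 hb₀.2) hbp.2 hm hn (hfactor ▸ hg)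
    refine ⟨a₀, ha₀, b₀, hb₀, bp, hbp, ?_⟩
    rw [hfactor, hminus, one_mul]
  · rintro ⟨a₀, ⟨ha₀A, ha₀M⟩, b₀, ⟨hb₀B, hb₀M⟩, bp, ⟨hbpB, hbpNp⟩, rfl⟩
    exact ⟨⟨a₀, ha₀A, b₀ * bp, B.mul_mem hb₀B hbpB, mul_assoc _ _ _⟩,
      a₀ * b₀, M.mul_mem ha₀M hb₀M, bp, hbpNp, rfl⟩

/-- Group-theoretic content of Lemma C.8: if `A` and `B` have Iwahori
decompositions with respect to `(N⁻, M, N⁺)`, `M` normalizes `N⁻` and `N⁺`,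
and `A ∩ N⁺ ⊆ B`, then an element of `G` lies in `A * B` and in `M * N⁺`
simultaneously if and only if it is of the form `a₀ * b₀ * b₊` with
`a₀ ∈ A ∩ M`, `b₀ ∈ B ∩ M` and `b₊ ∈ B ∩ N⁺`. -/
theorem mem_mul_inter_levi_decomposition
    {G : Type*} [Group G] (Nm M Np A B : Subgroup G)
    (hud : UniqueDecomposition (Nm : Set G) (M : Set G) (Np : Set G))
    (hnorm_m : ∀ m ∈ M, ∀ n ∈ Nm, m * n * m⁻¹ ∈ Nm)
    (hnorm_p : ∀ m ∈ M, ∀ n ∈ Np, m * n * m⁻¹ ∈ Np)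
    (hA : HasIwahoriDecomposition A (Nm : Set G) (M : Set G) (Np : Set G))
    (hB : HasIwahoriDecomposition B (Nm : Set G) (M : Set G) (Np : Set G))
    (hAB : (A : Set G) ∩ (Np : Set G) ⊆ (B : Set G))
    (g : G) :
    ((∃ a ∈ A, ∃ b ∈ B, g = a * b) ∧ (∃ m ∈ M, ∃ n ∈ Np, g = m * n)) ↔
      (∃ a₀ ∈ (A : Set G) ∩ (M : Set G), ∃ b₀ ∈ (B : Set G) ∩ (M : Set G),
        ∃ bp ∈ (B : Set G) ∩ (Np : Set G), g = a₀ * b₀ * bp) :=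
  mem_mul_inter_levi_decomposition_general Nm M Np A B hud hnorm_m hA hB hAB g
end

section
/- Let F be a field containing an element λ with λ ≠ 0 and λ² ≠ 1. Let A be an associative unital F-algebra, let S be a finite set of integers with S = −S, and let (e_j)_{j ∈ S} be a family of pairwise orthogonal idempotents in A with ∑_{j ∈ S} e_j = 1. Let Z denote the set of all elements of the form ∑_{j ∈ S} λ_j • e_j where (λ_j)_{j ∈ S} is any family of nonzero elements of F satisfying λ_{−j} = λ_j⁻¹ for all j ∈ S (so in particular λ_0 = 1 if 0 ∈ S, imposing λ_0 = 1 there). If an element a ∈ A commutes with every element of Z, then a commutes with e_j for every j ∈ S. -/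
/-- Let `(e j)_{j ∈ S}` be a family of pairwise orthogonal idempotents summing
to `1` in an `F`-algebra `A`, indexed by a finite symmetric set `S` of
integers, where the field `F` contains an element `lam` with `lam ≠ 0` and
`lam ^ 2 ≠ 1`.  If `a ∈ A` commutes with every element
`∑ j ∈ S, c j • e j`, where `(c j)` runs over the families of nonzero scalars
satisfying `c (-j) = (c j)⁻¹` (and `c 0 = 1` if `0 ∈ S`), then `a` commutes
with every `e j`. -/
theorem commutes_with_idempotents_of_commutes_with_torus
    {F : Type*} [Field F] (lam : F) (hlam0 : lam ≠ 0) (hlam1 : lam ^ 2 ≠ 1)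
    {A : Type*} [Ring A] [Algebra F A]
    (S : Finset ℤ) (hS : ∀ j : ℤ, j ∈ S ↔ -j ∈ S)
    (e : ℤ → A)
    (he_idem : ∀ j ∈ S, e j * e j = e j)
    (he_orth : ∀ j ∈ S, ∀ k ∈ S, j ≠ k → e j * e k = 0)
    (he_sum : ∑ j ∈ S, e j = 1)
    (a : A)
    (ha : ∀ c : ℤ → F, (∀ j ∈ S, c j ≠ 0) → (∀ j ∈ S, c (-j) = (c j)⁻¹) →
      (0 ∈ S → c 0 = 1) →
      a * (∑ j ∈ S, c j • e j) = (∑ j ∈ S, c j • e j) * a) :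
    ∀ j ∈ S, a * e j = e j * a := by
  have key : ∀ j ∈ S, j ≠ 0 → a * e j = e j * a := by
    intro j hj hj0
    have hjneg : -j ∈ S := (hS j).1 hj
    have hne : j ≠ -j := by omega
    have hne' : -j ≠ j := by omega
    have hz : ∀ u : F, u ≠ 0 →
        a * ((u - 1) • e j + (u⁻¹ - 1) • e (-j))
          = ((u - 1) • e j + (u⁻¹ - 1) • e (-j)) * a := by
      intro u hu
      set c : ℤ → F := fun k => if k = j then u else if k = -j then u⁻¹ else 1 with hc
      have hcj : c j = u := by simp [hc]
      have hcnj : c (-j) = u⁻¹ := by simp [hc, hne']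
      have hco : ∀ k, k ≠ j → k ≠ -j → c k = 1 := by
        intro k h1 h2; simp [hc, h1, h2]
      have hc1 : ∀ k ∈ S, c k ≠ 0 := by
        intro k _
        by_cases h1 : k = j
        · subst h1; rw [hcj]; exact hu
        · by_cases h2 : k = -j
          · subst h2; rw [hcnj]; exact inv_ne_zero hu
          · rw [hco k h1 h2]; exact one_ne_zero
      have hc2 : ∀ k ∈ S, c (-k) = (c k)⁻¹ := by
        intro k _
        by_cases h1 : k = j
        · subst h1; rw [hcnj, hcj]
        · by_cases h2 : k = -j
          · subst h2; rw [neg_neg, hcj, hcnj, inv_inv]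
          · rw [hco k h1 h2, hco (-k) (by omega) (by omega), inv_one]
      have hc3 : 0 ∈ S → c 0 = 1 := fun _ => hco 0 (by omega) (by omega)
      have hsum : ∑ k ∈ S, c k • e k
          = 1 + ((u - 1) • e j + (u⁻¹ - 1) • e (-j)) := by
        have h1 : ∑ k ∈ S, c k • e k = ∑ k ∈ S, (e k + (c k - 1) • e k) := by
          refine Finset.sum_congr rfl fun k _ => ?_
          rw [sub_smul, one_smul]; abel
        rw [h1, Finset.sum_add_distrib, he_sum]
        congr 1
        rw [← Finset.add_sum_erase _ _ hj]
        have h2 : ∑ k ∈ S.erase j, (c k - 1) • e k = (c (-j) - 1) • e (-j) := by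
          refine Finset.sum_eq_single_of_mem (-j)
            (Finset.mem_erase.2 ⟨hne', hjneg⟩) fun k hk hkne => ?_
          have hkj : k ≠ j := (Finset.mem_erase.1 hk).1
          rw [hco k hkj hkne, sub_self, zero_smul]
        rw [h2, hcj, hcnj]
      have := ha c hc1 hc2 hc3
      rw [hsum, mul_add, add_mul, mul_one, one_mul] at this
      exact add_left_cancel this
    have hX := hz lam hlam0
    have hY := hz lam⁻¹ (inv_ne_zero hlam0)
    rw [inv_inv] at hY
    set μ : F := (lam - 1) ^ 2 - (lam⁻¹ - 1) ^ 2 with hμdef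
    have hμ : μ ≠ 0 := by
      intro h
      have hkey : μ * lam ^ 2 = (lam - 1) ^ 3 * (lam + 1) := by
        rw [hμdef, sub_mul, ← mul_pow (lam⁻¹ - 1), sub_mul, inv_mul_cancel₀ hlam0, one_mul]
        ring
      rw [h, zero_mul] at hkey
      rcases mul_eq_zero.1 hkey.symm with h1 | h2
      · have h3 : lam - 1 = 0 := pow_eq_zero_iff (three_ne_zero) |>.1 h1
        have : lam = 1 := by rwa [sub_eq_zero] at h3
        exact hlam1 (by rw [this]; ring)
      · have : lam = -1 := by linear_combination h2
        exact hlam1 (by rw [this]; ring)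
    have hw : μ • e j =
        (lam - 1) • ((lam - 1) • e j + (lam⁻¹ - 1) • e (-j))
          - (lam⁻¹ - 1) • ((lam⁻¹ - 1) • e j + (lam - 1) • e (-j)) := by
      rw [hμdef]; module
    have hcomm : a * (μ • e j) = (μ • e j) * a := by
      rw [hw, mul_sub, sub_mul, mul_smul_comm, mul_smul_comm, smul_mul_assoc,
        smul_mul_assoc, hX, hY]
    have hsm : μ • (a * e j) = μ • (e j * a) := by
      rw [← mul_smul_comm, ← smul_mul_assoc, hcomm]
    have := congrArg (fun x => μ⁻¹ • x) hsm
    simpa [smul_smul, inv_mul_cancel₀ hμ] using this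
  intro j hj
  by_cases hj0 : j = 0
  · subst hj0
    have he0 : e 0 = 1 - ∑ k ∈ S.erase 0, e k := by
      rw [← he_sum, ← Finset.add_sum_erase _ _ hj]
      abel
    rw [he0, mul_sub, sub_mul, mul_one, one_mul, Finset.mul_sum, Finset.sum_mul]
    congr 1
    refine Finset.sum_congr rfl fun k hk => ?_
    exact key k (Finset.mem_of_mem_erase hk) (Finset.ne_of_mem_erase hk)
  · exact key j hj hj0
end
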